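/- arXiv:1710.00582 — 2 statements merged into one kernel-verified Lean document; each statement's English description precedes it below -/
import Mathlib

section
/- Let G be a finite soluble group. If G is a K-group (i.e., its subgroup lattice is complemented), then G satisfies the replacement property: for every irredundant generating sequence {g_1,...,g_m} of size m = m(G) and for every nontrivial element g of G, there is an index i such that {g_1,...,g_{i-1},g,g_{i+1},...,g_m} generates G. -/
open Subgroup
open scoped Classical

/-- A set `s` is an irredundant generating set of the group `G`: it generates `G`
but no proper subset does. -/
def IrredSet {G : Type*} [Group G] (s : Set G) : Prop :=
  Subgroup.closure s = ⊤ ∧ ∀ x ∈ s, Subgroup.closure (s \ {x}) ≠ ⊤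

/-- `mIrr G` is the largest size of an irredundant generating set of `G`. -/
noncomputable def mIrr (G : Type*) [Group G] : ℕ :=
  sSup {n | ∃ s : Set G, s.Finite ∧ s.ncard = n ∧ IrredSet s}

/-- `dGen G` is the smallest size of a generating set of `G`. -/
noncomputable def dGen (G : Type*) [Group G] : ℕ :=
  sInf {n | ∃ s : Set G, s.Finite ∧ s.ncard = n ∧ Subgroup.closure s = ⊤}

/-- A sequence `g : Fin n → G` is an irredundant generating sequence:
it generates `G` but no proper subsequence does. -/
def IrredSeq {G : Type*} [Group G] {n : ℕ} (g : Fin n → G) : Prop :=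
  Subgroup.closure (Set.range g) = ⊤ ∧
  ∀ i : Fin n, Subgroup.closure (g '' {i}ᶜ) ≠ ⊤

/-- `G` satisfies the replacement property: for every irredundant generating
sequence of maximal length `mIrr G` and every nontrivial `x : G`, some entry
can be replaced by `x` so that the sequence still generates. -/
def ReplacementProperty (G : Type*) [Group G] : Prop :=
  ∀ g : Fin (mIrr G) → G, IrredSeq g → ∀ x : G, x ≠ 1 →
    ∃ i, Subgroup.closure (Set.range (Function.update g i x)) = ⊤

/-- The strong replacement property: replacement holds for irredundant
generating sequences of any length. -/
def StrongReplacementProperty (G : Type*) [Group G] : Prop :=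
  ∀ (n : ℕ) (g : Fin n → G), IrredSeq g → ∀ x : G, x ≠ 1 →
    ∃ i, Subgroup.closure (Set.range (Function.update g i x)) = ⊤

/-- `G` is a K-group: its subgroup lattice is complemented. -/
def IsKGroup (G : Type*) [Group G] : Prop :=
  ∀ H : Subgroup G, ∃ X : Subgroup G, H ⊔ X = ⊤ ∧ H ⊓ X = ⊥

/-- `μ` is the Möbius function of the subgroup lattice of `G`. -/
def IsMobius {G : Type*} [Group G] (μ : Subgroup G → ℤ) : Prop :=
  ∀ H : Subgroup G, ∑ᶠ K ∈ {K : Subgroup G | H ≤ K}, μ K = if H = ⊤ then 1 else 0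

/-- `B/A` is a chief factor of `G`. -/
def ChiefFactor {G : Type*} [Group G] (A B : Subgroup G) : Prop :=
  A.Normal ∧ B.Normal ∧ A < B ∧
    ∀ N : Subgroup G, N.Normal → A ≤ N → N ≤ B → N = A ∨ N = B

/-- The factor `B/A` is complemented in `G/A`: there is a subgroup `K ≥ A`
with `K ⊔ B = G` and `K ⊓ B = A`. -/
def ComplementedFactor {G : Type*} [Group G] (A B : Subgroup G) : Prop :=
  ∃ K : Subgroup G, A ≤ K ∧ K ⊔ B = ⊤ ∧ K ⊓ B = A

/-- `c` is a chief series of `G`. -/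
def IsChiefSeries {G : Type*} [Group G] {n : ℕ} (c : Fin (n + 1) → Subgroup G) : Prop :=
  c 0 = ⊥ ∧ c (Fin.last n) = ⊤ ∧ ∀ i : Fin n, ChiefFactor (c i.castSucc) (c i.succ)

/-- `N` is a minimal normal subgroup of `G`. -/
def IsMinimalNormal {G : Type*} [Group G] (N : Subgroup G) : Prop :=
  N.Normal ∧ N ≠ ⊥ ∧ ∀ K : Subgroup G, K.Normal → K ≤ N → K = ⊥ ∨ K = N

/-- `F` is the Fitting subgroup of `G`: the largest nilpotent normal subgroup. -/
def IsFitting {G : Type*} [Group G] (F : Subgroup G) : Prop :=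
  F.Normal ∧ Group.IsNilpotent F ∧
    ∀ K : Subgroup G, K.Normal → Group.IsNilpotent K → K ≤ F


/-!
Induction on `|G|`. A minimal normal subgroup `N` of the soluble group `G` is abelian, so
`P ⊓ N` is normal whenever `P ⊔ N = G`; hence every proper supplement of `N` is a complement of
`N` and a maximal subgroup. As `N` has a complement, `m(G ⧸ N) < m(G)`. So the image in `G ⧸ N`
of an irredundant sequence `g` of length `m(G)` is redundant, say without `g j`, and the other
`g i` map to an irredundant sequence of length `m(G ⧸ N)`. Induction, applied to the image of `x`
(which lies outside `N`, since otherwise `x` could replace `g j`), yields an index `i`. If neither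
replacing `g i` nor replacing `g j` by `x` generated `G`, both subgroups would be proper
overgroups of the supplement `⟨x, g k : k ≠ i, j⟩` of `N`, hence equal to it, and together they
contain every `g k`.
-/

theorem range_update_eq_insert_image {α β : Type*} [DecidableEq α] (f : α → β) (a : α) (b : β) :
    Set.range (Function.update f a b) = insert b (f '' {a}ᶜ) := by
  ext y
  constructor
  · rintro ⟨k, rfl⟩
    by_cases hk : k = a
    · subst hk; simp
    · exact Or.inr ⟨k, hk, (Function.update_of_ne hk b f).symm⟩
  · rintro (rfl | ⟨k, hk, rfl⟩)
    · exact ⟨a, Function.update_self a y f⟩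
    · exact ⟨k, Function.update_of_ne hk b f⟩

theorem image_compl_union_image_compl {α β : Type*} (f : α → β) {a b : α} (h : a ≠ b) :
    f '' {a}ᶜ ∪ f '' {b}ᶜ = Set.range f := by
  rw [← Set.image_union, ← Set.compl_inter,
    Set.singleton_inter_eq_empty.mpr (Set.mem_singleton_iff.not.mpr h), Set.compl_empty,
    Set.image_univ]

theorem Fin.image_succAbove_compl {n : ℕ} (j : Fin (n + 1)) (i : Fin n) :
    j.succAbove '' {i}ᶜ = {j.succAbove i}ᶜ ∩ {j}ᶜ := by
  rw [Set.image_compl_eq_range_sdiff_image j.succAbove_right_injective, Fin.range_succAbove,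
    Set.image_singleton, Set.sdiff_eq, Set.inter_comm]

section Irredundant

variable {G : Type*} [Group G]

theorem bddAbove_ncard_irredSet [Finite G] :
    BddAbove {n | ∃ s : Set G, s.Finite ∧ s.ncard = n ∧ IrredSet s} :=
  ⟨Nat.card G, by rintro n ⟨s, -, rfl, -⟩; exact Set.ncard_le_card s⟩

theorem IrredSet.ncard_le_mIrr [Finite G] {s : Set G} (hs : IrredSet s) : s.ncard ≤ mIrr G :=
  le_csSup bddAbove_ncard_irredSet ⟨s, s.toFinite, rfl, hs⟩

theorem exists_irredSet_ncard_eq_mIrr [Finite G] :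
    ∃ s : Set G, IrredSet s ∧ s.ncard = mIrr G := by
  obtain ⟨s, hs⟩ := exists_minimal_of_wellFoundedLT (fun s : Set G => closure s = ⊤)
    ⟨Set.univ, closure_univ⟩
  have hirr : IrredSet s :=
    ⟨hs.prop, fun x hx => hs.not_prop_of_lt (Set.sdiff_singleton_ssubset.mpr hx)⟩
  obtain ⟨t, -, ht, hirr⟩ :=
    Nat.sSup_mem (s := {n | ∃ s : Set G, s.Finite ∧ s.ncard = n ∧ IrredSet s})
      ⟨_, s, s.toFinite, rfl, hirr⟩ bddAbove_ncard_irredSet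
  exact ⟨t, hirr, ht⟩

theorem IrredSeq.injective {n : ℕ} {g : Fin n → G} (hg : IrredSeq g) : Function.Injective g := by
  intro i k hik
  by_contra hne
  refine hg.2 i (top_unique (hg.1 ▸ closure_mono ?_))
  rintro _ ⟨l, rfl⟩
  by_cases hl : l = i
  · exact ⟨k, Ne.symm (hl ▸ hne), hl ▸ hik.symm⟩
  · exact ⟨l, hl, rfl⟩

theorem IrredSeq.irredSet_range {n : ℕ} {g : Fin n → G} (hg : IrredSeq g) :
    IrredSet (Set.range g) := by
  refine ⟨hg.1, ?_⟩
  rintro _ ⟨i, rfl⟩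
  rw [← Set.image_singleton, ← Set.image_compl_eq_range_sdiff_image hg.injective]
  exact hg.2 i

theorem IrredSeq.le_mIrr [Finite G] {n : ℕ} {g : Fin n → G} (hg : IrredSeq g) : n ≤ mIrr G := by
  simpa [Set.ncard_range_of_injective hg.injective] using hg.irredSet_range.ncard_le_mIrr

theorem exists_closure_image_compl_eq_top_of_mIrr_lt [Finite G] {n : ℕ} {g : Fin n → G}
    (hg : closure (Set.range g) = ⊤) (hn : mIrr G < n) : ∃ j, closure (g '' {j}ᶜ) = ⊤ := by
  by_contra! h
  exact hn.not_ge (IrredSeq.le_mIrr ⟨hg, h⟩)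

end Irredundant

section MinimalNormal

variable {G : Type*} [Group G]

theorem exists_isMinimalNormal [Finite G] [Nontrivial G] : ∃ N : Subgroup G, IsMinimalNormal N := by
  obtain ⟨N, hN⟩ := exists_minimal_of_wellFoundedLT (fun N : Subgroup G => N.Normal ∧ N ≠ ⊥)
    ⟨⊤, inferInstance, top_ne_bot⟩
  refine ⟨N, hN.prop.1, hN.prop.2, fun K hK hKN => ?_⟩
  by_cases hK' : K = ⊥
  · exact Or.inl hK'
  · exact Or.inr (hN.eq_of_le ⟨hK, hK'⟩ hKN)

theorem IsMinimalNormal.isMulCommutative [Group.IsSolvable G] {N : Subgroup G}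
    (hN : IsMinimalNormal N) : IsMulCommutative N := by
  have := hN.1
  rw [← le_centralizer_iff_isMulCommutative, ← commutator_eq_bot_iff_le_centralizer]
  exact (hN.2.2 _ inferInstance (commutator_le_left N N)).resolve_right
    (Group.IsSolvable.commutator_lt_of_ne_bot hN.2.1).ne

theorem normal_inf_of_sup_eq_top {N P : Subgroup G} [hN : N.Normal] [IsMulCommutative N]
    (hP : P ⊔ N = ⊤) : (P ⊓ N).Normal := by
  refine ⟨fun m hm g => ?_⟩
  obtain ⟨p, hp, a, ha, rfl⟩ := mem_sup_of_normal_right.mp (hP ▸ mem_top g : g ∈ P ⊔ N)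
  have ha_conj : a * m * a⁻¹ = m := by
    rw [setLike_mul_comm ha hm.2, mul_inv_cancel_right]
  rw [show p * a * m * (p * a)⁻¹ = p * (a * m * a⁻¹) * p⁻¹ by group, ha_conj]
  exact ⟨P.mul_mem (P.mul_mem hp hm.1) (P.inv_mem hp), hN.conj_mem m hm.2 p⟩

theorem IsMinimalNormal.inf_eq_bot_of_sup_eq_top {N P : Subgroup G} (hN : IsMinimalNormal N)
    [IsMulCommutative N] (hP : P ⊔ N = ⊤) (hP' : P ≠ ⊤) : P ⊓ N = ⊥ := by
  have := hN.1
  refine (hN.2.2 _ (normal_inf_of_sup_eq_top hP) inf_le_right).resolve_right fun h => hP' ?_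
  rw [← hP]
  exact (sup_eq_left.mpr (inf_eq_right.mp h)).symm

theorem IsMinimalNormal.eq_of_sup_eq_top_of_le {N P M : Subgroup G} (hN : IsMinimalNormal N)
    [IsMulCommutative N] (hP : P ⊔ N = ⊤) (hPM : P ≤ M) (hM : M ≠ ⊤) : M = P := by
  have := hN.1
  have hMN : M ⊓ N = ⊥ :=
    hN.inf_eq_bot_of_sup_eq_top (top_unique (hP ▸ sup_le_sup_right hPM N)) hM
  refine le_antisymm (fun y hy => ?_) hPM
  obtain ⟨p, hp, a, ha, rfl⟩ := mem_sup_of_normal_right.mp (hP ▸ mem_top y : y ∈ P ⊔ N)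
  have : a ∈ M ⊓ N := ⟨by simpa using M.mul_mem (M.inv_mem (hPM hp)) hy, ha⟩
  rw [hMN, mem_bot] at this
  simpa [this] using hp

theorem IsMinimalNormal.eq_top_or_eq_top_of_le_of_le {N S A B : Subgroup G}
    (hN : IsMinimalNormal N) [IsMulCommutative N] (hS : S ⊔ N = ⊤) (hSA : S ≤ A) (hSB : S ≤ B)
    (hAB : A ⊔ B = ⊤) : A = ⊤ ∨ B = ⊤ := by
  by_contra! h
  have hA := hN.eq_of_sup_eq_top_of_le hS hSA h.1
  have hB := hN.eq_of_sup_eq_top_of_le hS hSB h.2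
  rw [hA, hB, sup_idem] at hAB
  exact h.1 (hA.trans hAB)

end MinimalNormal

theorem card_quotient_lt {G : Type*} [Group G] [Finite G] {N : Subgroup G} (hN : N ≠ ⊥) :
    Nat.card (G ⧸ N) < Nat.card G := by
  rw [card_eq_card_quotient_mul_card_subgroup N]
  exact lt_mul_of_one_lt_right Nat.card_pos ((one_lt_card_iff_ne_bot N).mpr hN)

theorem IsKGroup.quotient {G : Type*} [Group G] (hK : IsKGroup G) (N : Subgroup G) [N.Normal] :
    IsKGroup (G ⧸ N) := by
  intro H
  set π := QuotientGroup.mk' N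
  have hπ : Function.Surjective π := QuotientGroup.mk'_surjective N
  obtain ⟨X, hsup, hinf⟩ := hK (H.comap π)
  refine ⟨X.map π, ?_, ?_⟩
  · rw [← map_comap_eq_self_of_surjective hπ H, ← Subgroup.map_sup, hsup,
      map_top_of_surjective π hπ]
  · rw [eq_bot_iff]
    rintro _ ⟨hy, x, hx, rfl⟩
    have : x ∈ H.comap π ⊓ X := ⟨hy, hx⟩
    rw [hinf, mem_bot] at this
    rw [this, map_one]
    exact one_mem _

section Quotient

variable {G : Type*} [Group G] {N : Subgroup G} [N.Normal]

theorem map_mk'_eq_top_iff {P : Subgroup G} : P.map (QuotientGroup.mk' N) = ⊤ ↔ P ⊔ N = ⊤ := by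
  rw [← (comap_injective (QuotientGroup.mk'_surjective N)).eq_iff, comap_map_eq, comap_top,
    QuotientGroup.ker_mk']

theorem closure_image_mk'_eq_top_iff {s : Set G} :
    closure (QuotientGroup.mk' N '' s) = ⊤ ↔ closure s ⊔ N = ⊤ := by
  rw [← MonoidHom.map_closure, map_mk'_eq_top_iff]

/-- Lift an irredundant generating set of `G ⧸ N` into a proper supplement `K` of `N`
and adjoin a nontrivial element of `N`. -/
theorem IsMinimalNormal.mIrr_quotient_lt [Finite G] (hN : IsMinimalNormal N) [IsMulCommutative N]
    {K : Subgroup G} (hK : K ⊔ N = ⊤) (hK' : K ≠ ⊤) : mIrr (G ⧸ N) < mIrr G := by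
  obtain ⟨sb, hsb, hsb_card⟩ := exists_irredSet_ncard_eq_mIrr (G := G ⧸ N)
  have hlift : ∀ y : G ⧸ N, ∃ k ∈ K, (k : G ⧸ N) = y := fun y =>
    (map_mk'_eq_top_iff.mpr hK ▸ mem_top y : y ∈ K.map (QuotientGroup.mk' N))
  choose f hfK hf using hlift
  obtain ⟨u, huN, hu⟩ := (bot_or_exists_ne_one N).resolve_left hN.2.1
  set s := f '' sb
  have hs_le : closure s ≤ K := (closure_le K).mpr (Set.image_subset_iff.mpr fun y _ => hfK y)
  have hs_sup : closure s ⊔ N = ⊤ := by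
    rw [← closure_image_mk'_eq_top_iff, Set.image_image]
    simp only [QuotientGroup.mk'_apply, hf, Set.image_id']
    exact hsb.1
  have hu_s : u ∉ closure s := fun h => hu <| by
    have : u ∈ K ⊓ N := ⟨hs_le h, huN⟩
    rwa [hN.inf_eq_bot_of_sup_eq_top hK hK', mem_bot] at this
  have hf_inj : Function.Injective f := Function.LeftInverse.injective hf
  refine hsb_card ▸ lt_of_lt_of_le (Nat.lt_add_one _) ?_
  rw [← Set.ncard_image_of_injective sb hf_inj,
    ← Set.ncard_insert_of_notMem (fun h => hu_s (subset_closure h))]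
  refine IrredSet.ncard_le_mIrr ⟨by_contra fun h => hu_s ?_, ?_⟩
  · rw [← hN.eq_of_sup_eq_top_of_le hs_sup (closure_mono (Set.subset_insert u s)) h]
    exact subset_closure (Set.mem_insert u s)
  · rintro _ (rfl | ⟨y, hy, rfl⟩) htop
    · rw [Set.insert_sdiff_self_of_notMem (fun h => hu_s (subset_closure h))] at htop
      exact hK' (top_unique (htop ▸ hs_le))
    · refine hsb.2 y hy (top_unique ?_)
      rw [← map_top_of_surjective _ (QuotientGroup.mk'_surjective N), ← htop,
        MonoidHom.map_closure, closure_le]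
      rintro _ ⟨z, ⟨rfl | ⟨w, hw, rfl⟩, hz⟩, rfl⟩
      · rw [QuotientGroup.mk'_apply, (QuotientGroup.eq_one_iff _).mpr huN]
        exact one_mem _
      · exact subset_closure
          ⟨by simpa [hf] using hw, fun h => hz (congrArg f (by simpa [hf] using h))⟩

theorem IsMinimalNormal.irredSeq_comp_succAbove (hN : IsMinimalNormal N) [IsMulCommutative N]
    {n : ℕ} {g : Fin (n + 1) → G} (hg : IrredSeq g) {j : Fin (n + 1)}
    (hj : closure (QuotientGroup.mk' N '' (g '' {j}ᶜ)) = ⊤) :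
    IrredSeq (QuotientGroup.mk' N ∘ g ∘ j.succAbove) := by
  refine ⟨by rwa [Set.range_comp, Set.range_comp, Fin.range_succAbove], fun i hi => ?_⟩
  rw [Set.image_comp, Set.image_comp, Fin.image_succAbove_compl,
    closure_image_mk'_eq_top_iff] at hi
  refine (hN.eq_top_or_eq_top_of_le_of_le hi
    (closure_mono (Set.image_mono Set.inter_subset_left))
    (closure_mono (Set.image_mono Set.inter_subset_right)) ?_).elim (hg.2 _) (hg.2 j)
  rw [← Subgroup.closure_union, image_compl_union_image_compl g (Fin.succAbove_ne j i), hg.1]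

theorem IsMinimalNormal.exists_closure_range_update_eq_top [Finite (G ⧸ N)]
    (hN : IsMinimalNormal N) [IsMulCommutative N] (hR : ReplacementProperty (G ⧸ N)) {n : ℕ}
    (hn : mIrr (G ⧸ N) ≤ n) {g : Fin (n + 1) → G} (hg : IrredSeq g) {x : G} (hx : x ≠ 1) :
    ∃ i, closure (Set.range (Function.update g i x)) = ⊤ := by
  by_contra! hcon
  simp only [range_update_eq_insert_image] at hcon
  set π := QuotientGroup.mk' N
  have hgen : closure (Set.range (π ∘ g)) = ⊤ := by
    rw [Set.range_comp, ← MonoidHom.map_closure, hg.1,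
      map_top_of_surjective _ (QuotientGroup.mk'_surjective N)]
  obtain ⟨j, hj⟩ := exists_closure_image_compl_eq_top_of_mIrr_lt hgen (Nat.lt_add_one_of_le hn)
  rw [Set.image_comp] at hj
  have hxN : x ∉ N := fun hxN => hx <| by
    have hM := hN.inf_eq_bot_of_sup_eq_top (top_unique (closure_image_mk'_eq_top_iff.mp hj ▸
      sup_le_sup_right (closure_mono (Set.subset_insert x _)) N)) (hcon j)
    exact mem_bot.mp (hM ▸ ⟨subset_closure (Set.mem_insert x _), hxN⟩)
  have hh := hN.irredSeq_comp_succAbove hg hj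
  obtain rfl : n = mIrr (G ⧸ N) := le_antisymm hh.le_mIrr hn
  obtain ⟨i, hi⟩ := hR _ hh (π x) (by simpa [π] using hxN)
  rw [range_update_eq_insert_image, Set.image_comp, Set.image_comp, Fin.image_succAbove_compl,
    ← Set.image_insert_eq, closure_image_mk'_eq_top_iff] at hi
  refine (hN.eq_top_or_eq_top_of_le_of_le hi
    (closure_mono (Set.insert_subset_insert (Set.image_mono Set.inter_subset_left)))
    (closure_mono (Set.insert_subset_insert (Set.image_mono Set.inter_subset_right))) ?_).elim
    (hcon _) (hcon j)
  refine top_unique ?_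
  rw [← hg.1, ← image_compl_union_image_compl g (Fin.succAbove_ne j i), Subgroup.closure_union]
  exact sup_le_sup (closure_mono (Set.subset_insert x _)) (closure_mono (Set.subset_insert x _))

end Quotient

theorem kGroup_implies_replacementProperty
    (G : Type*) [Group G] [Finite G] [Group.IsSolvable G] (hK : IsKGroup G) :
    ReplacementProperty G := by
  refine Finite.induction_subsingleton_or_nontrivial
    (P := fun G => ∀ [Group G] [Group.IsSolvable G], IsKGroup G → ReplacementProperty G) G
    (fun G _ _ _ _ _ _ _ x hx => absurd (Subsingleton.elim x 1) hx) (fun G _ _ ih _ _ hK => ?_) hK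
  obtain ⟨N, hN⟩ := exists_isMinimalNormal (G := G)
  have := hN.1
  have := hN.isMulCommutative
  obtain ⟨K, hNK, hNK'⟩ := hK N
  have hm : mIrr (G ⧸ N) < mIrr G := hN.mIrr_quotient_lt (K := K) (by rwa [sup_comm])
    fun h => hN.2.1 (by rwa [h, inf_top_eq] at hNK')
  have hR : ReplacementProperty (G ⧸ N) := ih _ (card_quotient_lt hN.2.1) (hK.quotient N)
  obtain ⟨n, hn⟩ : ∃ n, mIrr G = n + 1 := Nat.exists_eq_add_one_of_ne_zero (by omega)
  unfold ReplacementProperty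
  rw [hn]
  exact fun g hg x hx => hN.exists_closure_range_update_eq_top hR (by omega) hg hx
end

section
/- Let G be a finite soluble group. Then G is a K-group (its subgroup lattice is complemented) if and only if every chief factor of G is complemented in G. -/
open Subgroup
open scoped Classical

/-!
A complement `X` of `B` yields the complement `A ⊔ X` of the chief factor `B/A` by Dedekind's
modular law. Conversely, let `N` be a minimal normal subgroup; it is
complemented by hypothesis, say by `K`, and by induction `G ⧸ N ≅ K` is a K-group. Given
`H ≤ G`, if `H ⊓ N = ⊥` the preimage of a complement of `H N / N` complements `H`. Otherwise,
solubility makes `N` abelian, so `((H ⊓ N) ⊔ K) ⊓ N` is normalized by `K` and by `N`, hence is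
normal and equals `N`; thus `(H ⊓ N) ⊔ K = G`, and a complement of `H ⊓ K` inside `K`
complements `H` in `G`.
-/

section

variable {G : Type*} [Group G]

theorem isKGroup_iff_complementedLattice : IsKGroup G ↔ ComplementedLattice (Subgroup G) := by
  simp only [IsKGroup, complementedLattice_iff, isCompl_iff, disjoint_iff, codisjoint_iff,
    and_comm]

theorem IsKGroup.of_mulEquiv {Q : Type*} [Group Q] (e : G ≃* Q) (h : IsKGroup G) :
    IsKGroup Q := by
  rw [isKGroup_iff_complementedLattice] at h ⊢
  exact e.mapSubgroup.complementedLattice_iff.mp h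

theorem isKGroup_of_subsingleton [Subsingleton G] : IsKGroup G :=
  fun _ ↦ ⟨⊤, Subsingleton.elim _ _, Subsingleton.elim _ _⟩

theorem Subgroup.sup_inf_assoc_of_le {A B : Subgroup G} [A.Normal] (X : Subgroup G) (hAB : A ≤ B) :
    (A ⊔ X) ⊓ B = A ⊔ (X ⊓ B) := by
  apply SetLike.coe_injective
  rw [coe_inf, normal_mul, normal_mul, mul_inf_assoc A X B hAB]

theorem complementedFactor_of_isKGroup (hG : IsKGroup G) {A B : Subgroup G} [A.Normal]
    (hAB : A ≤ B) : ComplementedFactor A B := by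
  obtain ⟨X, hBX, hBX'⟩ := hG B
  refine ⟨A ⊔ X, le_sup_left, ?_, ?_⟩
  · rw [sup_right_comm, sup_of_le_right hAB, hBX]
  · rw [Subgroup.sup_inf_assoc_of_le X hAB, inf_comm, hBX', sup_bot_eq]

section Surjective

variable {Q : Type*} [Group Q] {f : G →* Q}

theorem ChiefFactor.comap (hf : Function.Surjective f) {A B : Subgroup Q}
    (h : ChiefFactor A B) : ChiefFactor (A.comap f) (B.comap f) := by
  obtain ⟨hA, hB, hAB, hchief⟩ := h
  refine ⟨hA.comap f, hB.comap f, (comap_lt_comap_of_surjective hf).mpr hAB, ?_⟩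
  intro M hM hAM hMB
  have hAM' : A ≤ M.map f := map_comap_eq_self_of_surjective hf A ▸ map_mono hAM
  have hMB' : M.map f ≤ B := map_comap_eq_self_of_surjective hf B ▸ map_mono hMB
  have hM_eq : (M.map f).comap f = M := by
    rw [comap_map_eq, sup_eq_left.mpr ((ker_le_comap f A).trans hAM)]
  rcases hchief _ (hM.map f hf) hAM' hMB' with h | h
  · exact Or.inl (by rw [← hM_eq, h])
  · exact Or.inr (by rw [← hM_eq, h])

theorem ComplementedFactor.of_comap (hf : Function.Surjective f) {A B : Subgroup Q}
    (hAB : A ≤ B) (h : ComplementedFactor (A.comap f) (B.comap f)) : ComplementedFactor A B := by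
  obtain ⟨K, hAK, hKB, hKB'⟩ := h
  have hmap : ∀ S : Subgroup Q, (S.comap f).map f = S := map_comap_eq_self_of_surjective hf
  refine ⟨K.map f, hmap A ▸ map_mono hAK, ?_, le_antisymm ?_ (le_inf ?_ hAB)⟩
  · rw [← hmap B, ← Subgroup.map_sup, hKB, map_top_of_surjective f hf]
  · rintro _ ⟨⟨k, hk, rfl⟩, hkB⟩
    exact (hKB' ▸ mem_inf.mpr ⟨hk, hkB⟩ : k ∈ A.comap f)
  · exact hmap A ▸ map_mono hAK

end Surjective

theorem forall_complementedFactor_quotient (N : Subgroup G) [N.Normal]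
    (h : ∀ A B : Subgroup G, ChiefFactor A B → ComplementedFactor A B) :
    ∀ A B : Subgroup (G ⧸ N), ChiefFactor A B → ComplementedFactor A B := fun _ _ hAB ↦
  have hπ := QuotientGroup.mk'_surjective N
  .of_comap hπ hAB.2.2.1.le (h _ _ (hAB.comap hπ))

theorem IsMinimalNormal.chiefFactor_bot {N : Subgroup G} (hN : IsMinimalNormal N) :
    ChiefFactor ⊥ N :=
  ⟨inferInstance, hN.1, bot_lt_iff_ne_bot.mpr hN.2.1, fun M hM _ hMN ↦ hN.2.2 M hM hMN⟩

theorem IsMinimalNormal.commutator_eq_bot [Group.IsSolvable G] {N : Subgroup G}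
    (hN : IsMinimalNormal N) : ⁅N, N⁆ = ⊥ := by
  have := hN.1
  exact (hN.2.2 _ inferInstance (commutator_le_left N N)).resolve_right
    (Group.IsSolvable.commutator_lt_of_ne_bot hN.2.1).ne

theorem Subgroup.normal_inf_of_sup_eq_top {K M N : Subgroup G} [N.Normal] (hN : ⁅N, N⁆ = ⊥)
    (hKN : K ⊔ N = ⊤) (hKM : K ≤ M) : (M ⊓ N).Normal := by
  rw [← normalizer_eq_top_iff, eq_top_iff, ← hKN]
  refine sup_le ?_ ?_
  · exact (le_inf (hKM.trans M.le_normalizer) le_normalizer_of_normal).trans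
      inf_normalizer_le_normalizer_inf
  · refine (commutator_eq_bot_iff_le_centralizer.mp hN).trans ?_
    exact (centralizer_le inf_le_right).trans (centralizer_le_normalizer _)

theorem IsKGroup.exists_sup_eq_top_inf_le {N : Subgroup G} [N.Normal]
    (hQ : IsKGroup (G ⧸ N)) (H : Subgroup G) : ∃ X : Subgroup G, H ⊔ X = ⊤ ∧ H ⊓ X ≤ N := by
  set π := QuotientGroup.mk' N
  obtain ⟨X, hX, hX'⟩ := hQ (H.map π)
  have hNX : N ≤ X.comap π := (QuotientGroup.ker_mk' N).symm.le.trans (ker_le_comap π X)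
  refine ⟨X.comap π, ?_, ?_⟩
  · rw [eq_top_iff, ← comap_top π, ← hX, ← comap_sup_eq π _ _ (QuotientGroup.mk'_surjective N),
      comap_map_eq, QuotientGroup.ker_mk']
    exact sup_le (sup_le le_sup_left (hNX.trans le_sup_right)) le_sup_right
  · rintro x ⟨hxH, hxX⟩
    have : π x ∈ H.map π ⊓ X := ⟨mem_map_of_mem π hxH, hxX⟩
    rw [hX'] at this
    exact (QuotientGroup.eq_one_iff x).mp this

theorem IsKGroup.exists_le_inf_eq_bot {K : Subgroup G} (hK : IsKGroup K) (H : Subgroup G) :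
    ∃ Y ≤ K, K ≤ H ⊔ Y ∧ H ⊓ Y = ⊥ := by
  obtain ⟨Y, hY, hY'⟩ := hK (H.subgroupOf K)
  have hsup := congrArg (map K.subtype) hY
  have hinf := congrArg (map K.subtype) hY'
  rw [Subgroup.map_sup, subgroupOf_map_subtype, ← MonoidHom.range_eq_map, range_subtype] at hsup
  rw [map_inf_eq _ _ _ K.subtype_injective, subgroupOf_map_subtype, Subgroup.map_bot] at hinf
  refine ⟨Y.map K.subtype, map_subtype_le Y, ?_, ?_⟩
  · exact hsup.ge.trans (sup_le_sup_right inf_le_left _)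
  · rwa [inf_assoc, inf_of_le_right (map_subtype_le Y)] at hinf

theorem IsKGroup.of_quotient {K N : Subgroup G} [N.Normal] (hN : ⁅N, N⁆ = ⊥)
    (hmin : ∀ M : Subgroup G, M.Normal → M ≤ N → M = ⊥ ∨ M = N) (hKN : K ⊔ N = ⊤)
    (hKN' : K ⊓ N = ⊥) (hQ : IsKGroup (G ⧸ N)) : IsKGroup G := by
  intro H
  by_cases hHN : H ⊓ N = ⊥
  · obtain ⟨X, hX, hX'⟩ := hQ.exists_sup_eq_top_inf_le H
    exact ⟨X, hX, le_bot_iff.mp (hHN ▸ le_inf inf_le_left hX')⟩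
  have hK : IsKGroup K := hQ.of_mulEquiv
    (isComplement'_of_disjoint_and_mul_eq_univ (disjoint_iff.mpr hKN')
      (by rw [← mul_normal, hKN, coe_top])).QuotientMulEquiv
  have hHNK : (H ⊓ N) ⊔ K = ⊤ := by
    have hnormal := Subgroup.normal_inf_of_sup_eq_top hN hKN
      (le_sup_right : K ≤ (H ⊓ N) ⊔ K)
    have hne : ((H ⊓ N) ⊔ K) ⊓ N ≠ ⊥ := fun h ↦
      hHN (le_bot_iff.mp (by rw [← h]; exact le_inf le_sup_left inf_le_right))
    have hN_le : N ≤ (H ⊓ N) ⊔ K :=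
      ((hmin _ hnormal inf_le_right).resolve_left hne).ge.trans inf_le_left
    rw [eq_top_iff, ← hKN]
    exact sup_le le_sup_right hN_le
  obtain ⟨Y, hYK, hKY, hHY⟩ := hK.exists_le_inf_eq_bot H
  refine ⟨Y, eq_top_iff.mpr ?_, hHY⟩
  rw [← hHNK]
  exact sup_le (inf_le_left.trans le_sup_left) hKY

theorem isKGroup_of_forall_complementedFactor [Finite G] [Group.IsSolvable G]
    (h : ∀ A B : Subgroup G, ChiefFactor A B → ComplementedFactor A B) : IsKGroup G := by
  induction hn : Nat.card G using Nat.strong_induction_on generalizing G with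
  | _ n ih =>
  rcases subsingleton_or_nontrivial G with _ | _
  · exact isKGroup_of_subsingleton
  obtain ⟨N, hN⟩ := exists_isMinimalNormal (G := G)
  have := hN.1
  obtain ⟨K, -, hKN, hKN'⟩ := h _ _ hN.chiefFactor_bot
  have hcard : Nat.card (G ⧸ N) < n := by
    rw [← hn, card_eq_card_quotient_mul_card_subgroup N]
    exact lt_mul_of_one_lt_right Nat.card_pos ((one_lt_card_iff_ne_bot N).mpr hN.2.1)
  exact IsKGroup.of_quotient hN.commutator_eq_bot hN.2.2 hKN hKN'
    (ih _ hcard (forall_complementedFactor_quotient N h) rfl)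

end

theorem kGroup_iff_all_chiefFactors_complemented
    (G : Type*) [Group G] [Finite G] [Group.IsSolvable G] :
    IsKGroup G ↔ ∀ A B : Subgroup G, ChiefFactor A B → ComplementedFactor A B :=
  ⟨fun hG _ _ hAB ↦ have := hAB.1; complementedFactor_of_isKGroup hG hAB.2.2.1.le,
    isKGroup_of_forall_complementedFactor⟩
end
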